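/- arXiv:1207.6137 — 2 statements merged into one kernel-verified Lean document; each statement's English description precedes it below -/
import Mathlib

section
/- Let V be an m×k matrix over a field F such that every entry of V is a distinct monomial in algebraically independent variables x₁, …, x_t over the prime field, and additionally each row of V involves a disjoint set of variables from every other row (rows are 'completely independent'). If m = k, then det(V) ≠ 0. -/
/-!
Expanding the determinant, each permutation `τ` contributes `± x ^ (∑ i, d i (τ i))`. Because the
rows use disjoint variables, the exponent `∑ i, d i (τ i)` restricted to the variables of row `i` is
`d i (τ i)`, and the entries of a row are distinct, so `τ` can be read off its exponent. Hence no
two terms cancel, and the coefficient of the identity's monomial is `1`.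
-/

open MvPolynomial Function Finset

section Exponents

variable {ι κ σ : Type*} [Fintype ι]

theorem sum_apply_eq_of_mem_support {d : ι → κ → σ →₀ ℕ}
    (hdisj : ∀ i i', i ≠ i' → ∀ j j', Disjoint (d i j).support (d i' j').support)
    (g : ι → κ) {i : ι} {j : κ} {v : σ} (hv : v ∈ (d i j).support) :
    (∑ i', d i' (g i')) v = d i (g i) v := by
  rw [Finsupp.finsetSum_apply, Finset.sum_eq_single_of_mem i (mem_univ i)]
  intro i' _ hi'
  by_contra hne
  exact disjoint_left.mp (hdisj i i' (Ne.symm hi') j (g i')) hv (Finsupp.mem_support_iff.mpr hne)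

theorem injective_sum_exponents {d : ι → κ → σ →₀ ℕ} (hrow : ∀ i, Injective (d i))
    (hdisj : ∀ i i', i ≠ i' → ∀ j j', Disjoint (d i j).support (d i' j').support) :
    Injective fun g : ι → κ => ∑ i, d i (g i) := by
  intro g g' h
  funext i
  refine hrow i (Finsupp.ext fun v => ?_)
  have hsum := DFunLike.congr_fun h v
  by_cases hv : v ∈ (d i (g i)).support
  · rwa [sum_apply_eq_of_mem_support hdisj g hv, sum_apply_eq_of_mem_support hdisj g' hv] at hsum
  by_cases hv' : v ∈ (d i (g' i)).support
  · rwa [sum_apply_eq_of_mem_support hdisj g hv', sum_apply_eq_of_mem_support hdisj g' hv'] at hsum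
  rw [Finsupp.notMem_support_iff.mp hv, Finsupp.notMem_support_iff.mp hv']

end Exponents

section MonomialMatrix

variable {ι σ R : Type*} [Fintype ι] [DecidableEq ι] [CommRing R]

theorem det_of_monomial (d : ι → ι → σ →₀ ℕ) :
    (Matrix.of fun i j => monomial (d i j) (1 : R)).det =
      ∑ τ : Equiv.Perm ι, Equiv.Perm.sign τ • monomial (∑ i, d i (τ i)) (1 : R) := by
  rw [← Matrix.det_transpose, Matrix.det_apply]
  refine sum_congr rfl fun τ _ => ?_
  rw [monomial_sum_one]
  rfl

theorem coeff_det_of_monomial {d : ι → ι → σ →₀ ℕ}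
    (hinj : Injective fun τ : Equiv.Perm ι => ∑ i, d i (τ i)) (τ : Equiv.Perm ι) :
    coeff (∑ i, d i (τ i)) (Matrix.of fun i j => monomial (d i j) (1 : R)).det =
      Equiv.Perm.sign τ • (1 : R) := by
  classical
  rw [det_of_monomial, coeff_sum, Finset.sum_eq_single_of_mem τ (mem_univ τ)]
  · rw [coeff_smul, coeff_monomial, if_pos rfl]
  · intro τ' _ hne
    rw [coeff_smul, coeff_monomial, if_neg (hinj.ne hne), smul_zero]

theorem det_of_monomial_ne_zero [Nontrivial R] {d : ι → ι → σ →₀ ℕ}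
    (hinj : Injective fun τ : Equiv.Perm ι => ∑ i, d i (τ i)) :
    (Matrix.of fun i j => monomial (d i j) (1 : R)).det ≠ 0 := by
  intro h
  have := coeff_det_of_monomial (R := R) hinj 1
  rw [h, coeff_zero, Equiv.Perm.sign_one, one_smul] at this
  exact zero_ne_one this

end MonomialMatrix

/-- Full-rank criterion: a square matrix whose entries are monomials, distinct
within each row, with disjoint variable sets across rows, has nonzero determinant. -/
theorem stmt_12 (F : Type*) [Field F] (m t : ℕ)
    (d : Fin m → Fin m → (Fin t →₀ ℕ))
    (V : Matrix (Fin m) (Fin m) (MvPolynomial (Fin t) F))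
    (hmono : ∀ i j, V i j = MvPolynomial.monomial (d i j) (1 : F))
    (hdistinct : ∀ i j j', j ≠ j' → d i j ≠ d i j')
    (hdisj : ∀ i i', i ≠ i' → ∀ j j', Disjoint (d i j).support (d i' j').support) :
    V.det ≠ 0 := by
  have hV : V = Matrix.of fun i j => monomial (d i j) (1 : F) := Matrix.ext hmono
  have hrow : ∀ i, Injective (d i) := fun i j j' => not_imp_not.mp (hdistinct i j j')
  have hinj : Injective fun τ : Equiv.Perm (Fin m) => ∑ i, d i (τ i) :=
    (injective_sum_exponents hrow hdisj).comp DFunLike.coe_injective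
  rw [hV]
  exact det_of_monomial_ne_zero hinj
end

section
/- Let d_{ji} ≥ 0 for i ∈ {1,…,M}, j ∈ {1,…,N}, and suppose M > R > 0. If for every subset S of R transmitters and every receiver n the inequality Σ_{j=1}^{N} Σ_{i∈S} d_{ji} + Σ_{i∉S} d_{ni} ≤ R holds, then Σ_{i,j} d_{ji} ≤ MNR/(M+NR−R). -/
/-- Outer bound combination step: if for every `R`-subset `S` of transmitters and
every receiver `n` we have `∑_j ∑_{i∈S} d_{ji} + ∑_{i∉S} d_{ni} ≤ R`, then the
total DoF is at most `MNR/(M+NR-R)`. -/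
theorem stmt_16 (M N R : ℕ) (hN : 0 < N) (hR : 0 < R) (hMR : R < M)
    (d : Fin N → Fin M → ℝ) (hpos : ∀ j i, 0 ≤ d j i)
    (hbound : ∀ S : Finset (Fin M), S.card = R → ∀ n : Fin N,
      (∑ j : Fin N, ∑ i ∈ S, d j i) + (∑ i ∈ Sᶜ, d n i) ≤ (R : ℝ)) :
    (∑ j : Fin N, ∑ i : Fin M, d j i)
      ≤ (M : ℝ) * N * R / ((M : ℝ) + (N : ℝ) * R - R) := by
  classical
  obtain ⟨m, rfl⟩ : ∃ m, M = m + 1 := ⟨M - 1, by omega⟩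
  obtain ⟨r, rfl⟩ : ∃ r, R = r + 1 := ⟨R - 1, by omega⟩
  set P := Finset.powersetCard (r + 1) (Finset.univ : Finset (Fin (m + 1))) with hP
  have hrm : r ≤ m := by omega
  -- counting lemmas
  have hnotmem : ∀ a : Fin (m + 1),
      (P.filter (fun S => a ∉ S)).card = m.choose (r + 1) := by
    intro a
    have he : P.filter (fun S => a ∉ S)
        = Finset.powersetCard (r + 1) (Finset.univ.erase a) := by
      ext S
      simp only [hP, Finset.mem_filter, Finset.mem_powersetCard, Finset.subset_erase,
        Finset.subset_univ, true_and]
      tauto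
    rw [he, Finset.card_powersetCard, Finset.card_erase_of_mem (Finset.mem_univ a)]
    simp
  have hcardP : P.card = (m + 1).choose (r + 1) := by
    simp [hP, Finset.card_powersetCard]
  have hmem : ∀ a : Fin (m + 1),
      (P.filter (fun S => a ∈ S)).card = m.choose r := by
    intro a
    have h1 := Finset.card_filter_add_card_filter_not (s := P)
      (p := fun S => a ∈ S)
    rw [hcardP] at h1
    have h2 : (P.filter (fun S => ¬ a ∈ S)).card = m.choose (r + 1) := hnotmem a
    have h3 : (m + 1).choose (r + 1) = m.choose r + m.choose (r + 1) :=
      Nat.choose_succ_succ m r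
    omega
  -- sum lemmas
  have hsumS : ∀ f : Fin (m + 1) → ℝ,
      ∑ S ∈ P, ∑ i ∈ S, f i = (m.choose r : ℝ) * ∑ i, f i := by
    intro f
    calc ∑ S ∈ P, ∑ i ∈ S, f i
        = ∑ S ∈ P, ∑ i : Fin (m + 1), if i ∈ S then f i else 0 := by
          refine Finset.sum_congr rfl fun S _ => ?_
          rw [Finset.sum_ite_mem, Finset.univ_inter]
      _ = ∑ i : Fin (m + 1), ∑ S ∈ P, if i ∈ S then f i else 0 := Finset.sum_comm
      _ = ∑ i : Fin (m + 1), (m.choose r : ℝ) * f i := by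
          refine Finset.sum_congr rfl fun i _ => ?_
          rw [Finset.sum_ite, Finset.sum_const_zero, add_zero, Finset.sum_const,
            hmem i, nsmul_eq_mul]
      _ = _ := by rw [← Finset.mul_sum]
  have hsumC : ∀ f : Fin (m + 1) → ℝ,
      ∑ S ∈ P, ∑ i ∈ Sᶜ, f i = (m.choose (r + 1) : ℝ) * ∑ i, f i := by
    intro f
    calc ∑ S ∈ P, ∑ i ∈ Sᶜ, f i
        = ∑ S ∈ P, ∑ i : Fin (m + 1), if i ∉ S then f i else 0 := by
          refine Finset.sum_congr rfl fun S _ => ?_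
          rw [show Sᶜ = Finset.univ.filter (fun i => i ∉ S) by
            ext i; simp [Finset.mem_compl]]
          rw [Finset.sum_filter]
      _ = ∑ i : Fin (m + 1), ∑ S ∈ P, if i ∉ S then f i else 0 := Finset.sum_comm
      _ = ∑ i : Fin (m + 1), (m.choose (r + 1) : ℝ) * f i := by
          refine Finset.sum_congr rfl fun i _ => ?_
          rw [Finset.sum_ite, Finset.sum_const_zero, add_zero, Finset.sum_const,
            hnotmem i, nsmul_eq_mul]
      _ = _ := by rw [← Finset.mul_sum]
  set T : ℝ := ∑ j : Fin N, ∑ i : Fin (m + 1), d j i with hT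
  set c1 : ℝ := (m.choose r : ℝ) with hc1
  set c2 : ℝ := (m.choose (r + 1) : ℝ) with hc2
  set Mr : ℝ := ((m : ℝ) + 1) with hMr
  set Rr : ℝ := ((r : ℝ) + 1) with hRr
  have hc1pos : (0 : ℝ) < c1 := by
    rw [hc1]; exact_mod_cast Nat.choose_pos hrm
  have hc2nonneg : (0 : ℝ) ≤ c2 := by positivity
  have hNr : (1 : ℝ) ≤ (N : ℝ) := by exact_mod_cast hN
  -- summed bound
  have hkey : ∑ S ∈ P, ∑ n : Fin N,
      ((∑ j : Fin N, ∑ i ∈ S, d j i) + (∑ i ∈ Sᶜ, d n i))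
      ≤ ∑ S ∈ P, ∑ _n : Fin N, ((r : ℝ) + 1) := by
    refine Finset.sum_le_sum fun S hS => Finset.sum_le_sum fun n _ => ?_
    have hScard : S.card = r + 1 := (Finset.mem_powersetCard.mp hS).2
    have := hbound S hScard n
    push_cast at this
    exact this
  -- compute both sides
  have hA : ∑ S ∈ P, ∑ j : Fin N, ∑ i ∈ S, d j i = c1 * T := by
    rw [Finset.sum_comm]
    simp_rw [hsumS]
    rw [← Finset.mul_sum]
  have hB : ∑ S ∈ P, ∑ n : Fin N, ∑ i ∈ Sᶜ, d n i = c2 * T := by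
    rw [Finset.sum_comm]
    have hh : ∀ n : Fin N, ∑ S ∈ P, ∑ i ∈ Sᶜ, d n i = c2 * ∑ i, d n i :=
      fun n => hsumC (d n)
    simp_rw [hh]
    rw [← Finset.mul_sum]
  have hLHS : ∑ S ∈ P, ∑ n : Fin N,
      ((∑ j : Fin N, ∑ i ∈ S, d j i) + (∑ i ∈ Sᶜ, d n i))
      = (N : ℝ) * (c1 * T) + c2 * T := by
    simp_rw [Finset.sum_add_distrib]
    rw [hB, ← hA]
    congr 1
    rw [Finset.mul_sum]
    refine Finset.sum_congr rfl fun S _ => ?_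
    rw [Finset.sum_const, Finset.card_univ, Fintype.card_fin, nsmul_eq_mul]
  have hRHS : ∑ S ∈ P, ∑ _n : Fin N, ((r : ℝ) + 1)
      = (c1 + c2) * ((N : ℝ) * Rr) := by
    rw [Finset.sum_const, Finset.sum_const, Finset.card_univ, Fintype.card_fin, hcardP]
    have h3 : ((m + 1).choose (r + 1) : ℝ) = c1 + c2 := by
      rw [hc1, hc2]
      exact_mod_cast congrArg (Nat.cast (R := ℝ)) (Nat.choose_succ_succ m r)
    simp only [nsmul_eq_mul, hRr]
    rw [h3]
    try ring
  have key : (N : ℝ) * (c1 * T) + c2 * T ≤ (c1 + c2) * ((N : ℝ) * Rr) := by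
    rw [← hLHS, ← hRHS]; exact hkey
  -- identity M * c1 = R * (c1 + c2)
  have hid : Mr * c1 = Rr * (c1 + c2) := by
    have := Nat.add_one_mul_choose_eq m r
    have h3 : (m + 1) * m.choose r = (m.choose r + m.choose (r + 1)) * (r + 1) := by
      rw [← Nat.choose_succ_succ m r]
      exact this
    have h4 : ((m : ℝ) + 1) * c1 = (c1 + c2) * ((r : ℝ) + 1) := by
      rw [hc1, hc2]
      exact_mod_cast congrArg (Nat.cast (R := ℝ)) h3
    rw [hMr, hRr]; linarith [h4]
  -- denominator positive
  have hD : (0 : ℝ) < Mr + (N : ℝ) * Rr - Rr := by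
    have hMRr : Rr < Mr := by
      rw [hMr, hRr]
      have : (r : ℝ) < m := by exact_mod_cast (by omega : r < m)
      linarith
    nlinarith [hRr ▸ (by positivity : (0:ℝ) < (r : ℝ) + 1)]
  have hgoal : T * (Mr + (N : ℝ) * Rr - Rr) ≤ Mr * (N : ℝ) * Rr := by
    have hcpos : (0 : ℝ) < (N : ℝ) * c1 + c2 := by nlinarith
    have h2 : T * ((N : ℝ) * c1 + c2) ≤ (N : ℝ) * Rr * (c1 + c2) := by nlinarith [key]
    have hDid : (c1 + c2) * (Mr + (N : ℝ) * Rr - Rr) = Mr * ((N : ℝ) * c1 + c2) := by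
      linear_combination (1 - (N : ℝ)) * hid
    have h3 : T * (Mr + (N : ℝ) * Rr - Rr) * ((N : ℝ) * c1 + c2)
        ≤ Mr * (N : ℝ) * Rr * ((N : ℝ) * c1 + c2) := by
      calc T * (Mr + (N : ℝ) * Rr - Rr) * ((N : ℝ) * c1 + c2)
          = T * ((N : ℝ) * c1 + c2) * (Mr + (N : ℝ) * Rr - Rr) := by ring
        _ ≤ (N : ℝ) * Rr * (c1 + c2) * (Mr + (N : ℝ) * Rr - Rr) :=
            mul_le_mul_of_nonneg_right h2 hD.le
        _ = Mr * (N : ℝ) * Rr * ((N : ℝ) * c1 + c2) := by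
            linear_combination ((N : ℝ) * Rr) * hDid
    exact le_of_mul_le_mul_right h3 hcpos
  push_cast
  simp only [hMr, hRr] at hgoal hD
  rw [le_div_iff₀ hD]
  linarith [hgoal]
end
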